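/- arXiv:2010.12893 — 3 statements merged into one kernel-verified Lean document; each statement's English description precedes it below -/
import Mathlib

section
/- There do not exist orientation-reversing homeomorphisms f, g of the real line fixing 0 such that 0 is locally asymptotically attracting for f and g (i.e., for all x near 0 with x ≠ 0, |f(x)| < |x| and |g(x)| < |x|) and simultaneously locally repelling for both compositions f∘g and g∘f (i.e., for all x near 0 with x ≠ 0, |f(g(x))| > |x| and |g(f(x))| > |x|). -/
theorem no_parrondo_dim_one :
    ¬ ∃ (f g : ℝ ≃ₜ ℝ), StrictAnti f ∧ StrictAnti g ∧ f 0 = 0 ∧ g 0 = 0 ∧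
      (∃ ε > (0:ℝ), ∀ x : ℝ, 0 < |x| → |x| < ε →
        |f x| < |x| ∧ |g x| < |x| ∧ |f (g x)| > |x| ∧ |g (f x)| > |x|) := by
  rintro ⟨f, g, hf, hg, hf0, hg0, ε, hε, h⟩
  set x := ε / 2 with hx
  have hx0 : 0 < |x| := by rw [abs_of_pos (by positivity)]; positivity
  have hxε : |x| < ε := by rw [abs_of_pos (by positivity)]; linarith
  obtain ⟨-, hgx, hfgx, -⟩ := h x hx0 hxε
  have hgx0 : g x ≠ 0 := by
    intro h0
    have : x = 0 := g.injective (by rw [h0, hg0])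
    simp [this] at hx0
  obtain ⟨hfa, -, -, -⟩ := h (g x) (abs_pos.mpr hgx0) (lt_trans hgx hxε)
  linarith
end

section
/- Let f, g : ℝ → ℝ be strictly decreasing bijections with f(0) = g(0) = 0. Suppose there is ε > 0 such that for all x with 0 < |x| < ε: |f(f(x))| < |x|, |g(g(x))| < |x|, |f(g(x))| > |x|, and |g(f(x))| > |x|, and moreover all of f(x), g(x), f(g(x)), g(f(f(g(x)))) have absolute value less than ε whenever 0 < |x| < ε/4. Then a contradiction follows (such f and g cannot exist). -/
theorem no_parrondo_dim_one_explicit (f g : ℝ → ℝ)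
    (hf : Function.Bijective f) (hg : Function.Bijective g)
    (hfa : StrictAnti f) (hga : StrictAnti g)
    (hf0 : f 0 = 0) (hg0 : g 0 = 0)
    (ε : ℝ) (hε : 0 < ε)
    (hcond : ∀ x : ℝ, 0 < |x| → |x| < ε →
      |f (f x)| < |x| ∧ |g (g x)| < |x| ∧ |f (g x)| > |x| ∧ |g (f x)| > |x|)
    (hsmall : ∀ x : ℝ, 0 < |x| → |x| < ε / 4 →
      |f x| < ε ∧ |g x| < ε ∧ |f (g x)| < ε ∧ |g (f (f (g x)))| < ε) :
    False := by
  set u := ε / 8 with hu_def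
  have hu : 0 < u := by positivity
  have hau : |u| = u := abs_of_pos hu
  have hu0 : 0 < |u| := by rw [hau]; exact hu
  have huε4 : |u| < ε / 4 := by rw [hau]; linarith
  have huε : |u| < ε := by rw [hau]; linarith
  -- signs
  have hgu : g u < 0 := by have := hga hu; rwa [hg0] at this
  have hfgu : 0 < f (g u) := by have := hfa hgu; rwa [hf0] at this
  have hffgu : f (f (g u)) < 0 := by have := hfa hfgu; rwa [hf0] at this
  have hgffgu : 0 < g (f (f (g u))) := by have := hga hffgu; rwa [hg0] at this
  have hggu : 0 < g (g u) := by have := hga hgu; rwa [hg0] at this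
  -- smallness
  obtain ⟨_, hgu_s, hfgu_s, _⟩ := hsmall u hu0 huε4
  -- conditions at u
  obtain ⟨_, hgg, hfg, _⟩ := hcond u hu0 huε
  -- conditions at g u
  have hagu : |g u| = -(g u) := abs_of_neg hgu
  obtain ⟨hffgu_lt, _, _, _⟩ := hcond (g u) (abs_pos.mpr (ne_of_lt hgu)) hgu_s
  -- conditions at f (g u)
  have hafgu : |f (g u)| = f (g u) := abs_of_pos hfgu
  obtain ⟨_, _, _, hgff⟩ := hcond (f (g u)) (abs_pos.mpr (ne_of_gt hfgu)) hfgu_s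
  -- chain: u < f (g u) < g (f (f (g u)))
  have h1 : u < f (g u) := by rwa [hafgu, hau] at hfg
  have h2 : f (g u) < g (f (f (g u))) := by
    rwa [hafgu, abs_of_pos hgffgu] at hgff
  -- other chain: g (f (f (g u))) < g (g u) < u
  have h3 : g u < f (f (g u)) := by
    rw [abs_of_neg hffgu, hagu] at hffgu_lt; linarith
  have h4 : g (f (f (g u))) < g (g u) := hga h3
  have h5 : g (g u) < u := by rwa [abs_of_pos hggu, hau] at hgg
  linarith
end

section
/- There exist homeomorphisms f, g : ℝ → ℝ fixing 0 such that 0 is globally asymptotically stable for f and for g (all forward orbits converge to 0 and for all x ≠ 0, |f(f(x))| < |x|, |g(g(x))| < |x|), but 0 is not stable for f∘g: there exists x with (f∘g)^n(x) → ∞. -/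
/-! Both maps are orientation-reversing with slope `-2` on one half-line and `-1/3` on the other,
so each swaps the half-lines and its square is `x ↦ (2/3) x`; the iterates therefore contract.
In `f ∘ g`, however, `g` sends `[0, ∞)` to `(-∞, 0]` with slope `-2` and `f` sends it back with
slope `-2`, so `f ∘ g` is `x ↦ 4 x` on `[0, ∞)`. -/

open Filter

theorem Filter.Tendsto.of_even_odd {α : Type*} {u : ℕ → α} {l : Filter α}
    (h_even : Tendsto (fun n => u (2 * n)) atTop l)
    (h_odd : Tendsto (fun n => u (2 * n + 1)) atTop l) : Tendsto u atTop l := by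
  intro s hs
  obtain ⟨N₀, hN₀⟩ := eventually_atTop.1 (h_even hs)
  obtain ⟨N₁, hN₁⟩ := eventually_atTop.1 (h_odd hs)
  refine eventually_atTop.2 ⟨2 * max N₀ N₁, fun n hn => ?_⟩
  obtain ⟨k, rfl | rfl⟩ := Nat.even_or_odd' n
  · exact hN₀ k (by omega)
  · exact hN₁ k (by omega)

theorem Function.tendsto_iterate_of_tendsto_iterate_two_mul {α : Type*} {f : α → α}
    {l : Filter α} (h : ∀ x, Tendsto (fun n => f^[2 * n] x) atTop l) (x : α) :
    Tendsto (fun n => f^[n] x) atTop l :=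
  .of_even_odd (h x) <| by simpa only [Function.iterate_succ_apply] using h (f x)

noncomputable section

def flipScale (a b x : ℝ) : ℝ := -(a * min x 0 + b * max x 0)

theorem flipScale_zero (a b : ℝ) : flipScale a b 0 = 0 := by simp [flipScale]

theorem flipScale_of_nonpos (a b : ℝ) {x : ℝ} (hx : x ≤ 0) : flipScale a b x = -(a * x) := by
  simp [flipScale, hx]

theorem flipScale_of_nonneg (a b : ℝ) {x : ℝ} (hx : 0 ≤ x) : flipScale a b x = -(b * x) := by
  simp [flipScale, hx]

theorem continuous_flipScale (a b : ℝ) : Continuous (flipScale a b) := by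
  unfold flipScale; fun_prop

theorem flipScale_flipScale_of_nonpos (a b : ℝ) {c d x : ℝ} (hc : 0 ≤ c) (hx : x ≤ 0) :
    flipScale a b (flipScale c d x) = b * c * x := by
  rw [flipScale_of_nonpos c d hx, flipScale_of_nonneg a b (by nlinarith)]; ring

theorem flipScale_flipScale_of_nonneg (a b : ℝ) {c d x : ℝ} (hd : 0 ≤ d) (hx : 0 ≤ x) :
    flipScale a b (flipScale c d x) = a * d * x := by
  rw [flipScale_of_nonneg c d hx, flipScale_of_nonpos a b (by nlinarith)]; ring

theorem flipScale_flipScale {a b : ℝ} (ha : 0 ≤ a) (hb : 0 ≤ b) (x : ℝ) :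
    flipScale a b (flipScale a b x) = a * b * x := by
  rcases le_total x 0 with hx | hx
  · rw [flipScale_flipScale_of_nonpos a b ha hx, mul_comm b]
  · exact flipScale_flipScale_of_nonneg a b hb hx

theorem flipScale_inv_flipScale {a b : ℝ} (ha : 0 < a) (hb : 0 < b) (x : ℝ) :
    flipScale b⁻¹ a⁻¹ (flipScale a b x) = x := by
  rcases le_total x 0 with hx | hx
  · rw [flipScale_flipScale_of_nonpos _ _ ha.le hx, inv_mul_cancel₀ ha.ne', one_mul]
  · rw [flipScale_flipScale_of_nonneg _ _ hb.le hx, inv_mul_cancel₀ hb.ne', one_mul]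

def flipScaleHomeomorph {a b : ℝ} (ha : 0 < a) (hb : 0 < b) : ℝ ≃ₜ ℝ where
  toFun := flipScale a b
  invFun := flipScale b⁻¹ a⁻¹
  left_inv := flipScale_inv_flipScale ha hb
  right_inv x := by
    simpa only [inv_inv] using flipScale_inv_flipScale (inv_pos.2 hb) (inv_pos.2 ha) x
  continuous_toFun := continuous_flipScale a b
  continuous_invFun := continuous_flipScale b⁻¹ a⁻¹

theorem flipScale_iterate_two_mul {a b : ℝ} (ha : 0 ≤ a) (hb : 0 ≤ b) (n : ℕ) (x : ℝ) :
    (flipScale a b)^[2 * n] x = (a * b) ^ n * x := by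
  have hsq : (flipScale a b)^[2] = (a * b * ·) := funext (flipScale_flipScale ha hb)
  rw [Function.iterate_mul, hsq, mul_left_iterate]

theorem tendsto_flipScale_iterate {a b : ℝ} (ha : 0 ≤ a) (hb : 0 ≤ b) (hab : a * b < 1)
    (x : ℝ) : Tendsto (fun n => (flipScale a b)^[n] x) atTop (nhds 0) := by
  refine Function.tendsto_iterate_of_tendsto_iterate_two_mul (fun y => ?_) x
  simp_rw [flipScale_iterate_two_mul ha hb]
  simpa using (tendsto_pow_atTop_nhds_zero_of_lt_one (mul_nonneg ha hb) hab).mul_const y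

theorem flipScale_comp_flipScale_iterate_of_nonneg (a b c d : ℝ) {x : ℝ} (ha : 0 ≤ a)
    (hd : 0 ≤ d) (hx : 0 ≤ x) (n : ℕ) :
    (flipScale a b ∘ flipScale c d)^[n] x = (a * d) ^ n * x := by
  induction n with
  | zero => simp
  | succ n ih =>
    rw [Function.iterate_succ_apply', ih, Function.comp_apply,
      flipScale_flipScale_of_nonneg a b hd (by positivity), pow_succ]
    ring

theorem abs_flipScale_flipScale_lt {a b : ℝ} (ha : 0 ≤ a) (hb : 0 ≤ b) (hab : a * b < 1)
    {x : ℝ} (hx : x ≠ 0) : |flipScale a b (flipScale a b x)| < |x| := by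
  rw [flipScale_flipScale ha hb, abs_mul, abs_of_nonneg (mul_nonneg ha hb)]
  exact mul_lt_of_lt_one_left (abs_pos.2 hx) hab

@[simp]
theorem coe_flipScaleHomeomorph {a b : ℝ} (ha : 0 < a) (hb : 0 < b) :
    ⇑(flipScaleHomeomorph ha hb) = flipScale a b :=
  rfl

end

theorem parrondo_homeomorphisms_line :
    ∃ (f g : ℝ ≃ₜ ℝ), f 0 = 0 ∧ g 0 = 0 ∧
      (∀ x : ℝ, x ≠ 0 → |f (f x)| < |x| ∧ |g (g x)| < |x|) ∧
      (∀ x : ℝ, Tendsto (fun n => (⇑f)^[n] x) atTop (nhds 0) ∧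
        Tendsto (fun n => (⇑g)^[n] x) atTop (nhds 0)) ∧
      (∃ x : ℝ, Tendsto (fun n => (⇑f ∘ ⇑g)^[n] x) atTop atTop) := by
  have h2 : (0 : ℝ) < 2 := two_pos
  have h3 : (0 : ℝ) < 3⁻¹ := by norm_num
  have hf : 2 * 3⁻¹ < (1 : ℝ) := by norm_num
  have hg : 3⁻¹ * 2 < (1 : ℝ) := by norm_num
  refine ⟨flipScaleHomeomorph h2 h3, flipScaleHomeomorph h3 h2, ?_, ?_, fun x hx => ⟨?_, ?_⟩,
    fun x => ⟨?_, ?_⟩, 1, ?_⟩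
  all_goals simp only [coe_flipScaleHomeomorph]
  · exact flipScale_zero _ _
  · exact flipScale_zero _ _
  · exact abs_flipScale_flipScale_lt h2.le h3.le hf hx
  · exact abs_flipScale_flipScale_lt h3.le h2.le hg hx
  · exact tendsto_flipScale_iterate h2.le h3.le hf x
  · exact tendsto_flipScale_iterate h3.le h2.le hg x
  · simp_rw [flipScale_comp_flipScale_iterate_of_nonneg 2 3⁻¹ 3⁻¹ 2 h2.le h2.le zero_le_one,
      mul_one]
    exact tendsto_pow_atTop_atTop_of_one_lt (by norm_num)
end
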